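/- arXiv:2601.01623 — 3 statements merged into one kernel-verified Lean document; each statement's English description precedes it below -/
import Mathlib

section
/- Let (a_j)_{j≥1} be a non-increasing sequence of nonnegative reals with a_j ≤ C·j^{-β-1} for some constants C > 0 and β > 0. Then for any σ with 1 < 2σ < 1+β, there exist constants C' > 0 and β̃ := β + 1 - 2σ > 0 such that for all integers 2 ≤ m₁ < m₂, ∑_{j=m₁}^{m₂} (a_j - a_{j+4})·j^{2σ} ≤ C'·m₁^{-β̃}. -/
/-!
Write `d_j = a_j - a_{j+4} ≥ 0`. On a dyadic block `[m, 2m)` the differences telescope, so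
`∑ d_j ≤ 4 a_m ≤ 4C m^{-β-1}`, while the weight is at most `(2m)^{2σ}`; hence the block
contributes `O(m^{-β̃})`. Summing these bounds over the blocks `[2^i m, 2^{i+1} m)` gives a
geometric series with ratio `2^{-β̃} < 1`.
-/

open Finset

theorem sum_Ico_sub_shift_le_mul {a : ℕ → ℝ} (ha : Antitone a) (h0 : ∀ j, 0 ≤ a j)
    (k m M : ℕ) : ∑ j ∈ Ico m M, (a j - a (j + k)) ≤ k * a m := by
  rcases lt_or_ge M m with hMm | hmM
  · simpa [Ico_eq_empty_of_le hMm.le] using mul_nonneg (Nat.cast_nonneg k) (h0 m)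
  have hsplit : ∑ j ∈ Ico m M, a j + ∑ j ∈ Ico M (M + k), a j
      = ∑ j ∈ Ico m (m + k), a j + ∑ j ∈ Ico m M, a (j + k) := by
    rw [sum_Ico_consecutive _ hmM (by omega), sum_Ico_add',
      sum_Ico_consecutive _ (by omega : m ≤ m + k) (by omega : m + k ≤ M + k)]
  have hhead : ∑ j ∈ Ico m (m + k), a j ≤ k * a m :=
    calc ∑ j ∈ Ico m (m + k), a j ≤ ∑ _j ∈ Ico m (m + k), a m :=
          sum_le_sum fun j hj => ha (mem_Ico.1 hj).1
      _ = k * a m := by simp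
  have htail : 0 ≤ ∑ j ∈ Ico M (M + k), a j := sum_nonneg fun j _ => h0 j
  rw [sum_sub_distrib]
  linarith

theorem sum_Ico_two_mul_sub_shift_mul_rpow_le {a : ℕ → ℝ} (ha : Antitone a)
    (h0 : ∀ j, 0 ≤ a j) {C β p : ℝ} (hp : 0 ≤ p)
    (h_decay : ∀ j : ℕ, 1 ≤ j → a j ≤ C * (j : ℝ) ^ (-β - 1)) (k : ℕ) {m : ℕ} (hm : 1 ≤ m) :
    ∑ j ∈ Ico m (2 * m), (a j - a (j + k)) * (j : ℝ) ^ p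
      ≤ k * C * 2 ^ p * (m : ℝ) ^ (-(β + 1 - p)) := by
  have hm₀ : (0 : ℝ) < m := by exact_mod_cast hm
  calc ∑ j ∈ Ico m (2 * m), (a j - a (j + k)) * (j : ℝ) ^ p
      ≤ ∑ j ∈ Ico m (2 * m), (a j - a (j + k)) * (2 * m : ℝ) ^ p := by
        gcongr with j hj
        · exact sub_nonneg.2 (ha (by omega))
        · exact_mod_cast (mem_Ico.1 hj).2.le
    _ = (∑ j ∈ Ico m (2 * m), (a j - a (j + k))) * (2 * m : ℝ) ^ p := (sum_mul ..).symm
    _ ≤ (k * a m) * (2 * m : ℝ) ^ p := by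
        gcongr
        exact sum_Ico_sub_shift_le_mul ha h0 k m _
    _ ≤ (k * (C * (m : ℝ) ^ (-β - 1))) * (2 * m : ℝ) ^ p := by
        gcongr
        exact h_decay m hm
    _ = k * C * 2 ^ p * (m : ℝ) ^ (-(β + 1 - p)) := by
        rw [Real.mul_rpow zero_le_two hm₀.le, show -(β + 1 - p) = (-β - 1) + p by ring,
          Real.rpow_add hm₀]
        ring

theorem sum_Ico_le_of_sum_Ico_two_mul_le {f : ℕ → ℝ} (hf : ∀ j, 0 ≤ f j) {A b : ℝ}
    (hA : 0 ≤ A) (hb : 0 < b)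
    (hblock : ∀ m : ℕ, 1 ≤ m → ∑ j ∈ Ico m (2 * m), f j ≤ A * (m : ℝ) ^ (-b))
    {m : ℕ} (hm : 1 ≤ m) (M : ℕ) :
    ∑ j ∈ Ico m M, f j ≤ A / (1 - 2 ^ (-b)) * (m : ℝ) ^ (-b) := by
  set r : ℝ := 2 ^ (-b)
  have hr : r < 1 := Real.rpow_lt_one_of_one_lt_of_neg one_lt_two (neg_neg_of_pos hb)
  set K := A / (1 - r)
  have hr₀ : 0 < r := Real.rpow_pos_of_pos two_pos _
  have hAK : A ≤ K := le_div_self hA (by linarith) (by linarith)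
  have hK : A + K * r = K := by
    linear_combination -div_mul_cancel₀ A (sub_ne_zero.2 hr.ne')
  induction hn : M - m using Nat.strong_induction_on generalizing m with
  | _ n ih =>
  by_cases hM : M ≤ 2 * m
  · calc ∑ j ∈ Ico m M, f j ≤ ∑ j ∈ Ico m (2 * m), f j :=
          sum_le_sum_of_subset_of_nonneg (Ico_subset_Ico_right hM) fun j _ _ => hf j
      _ ≤ A * (m : ℝ) ^ (-b) := hblock m hm
      _ ≤ K * (m : ℝ) ^ (-b) := by gcongr
  · rw [← sum_Ico_consecutive _ (by omega : m ≤ 2 * m) (by omega : 2 * m ≤ M)]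
    have htail := ih (M - 2 * m) (by omega) (by omega : 1 ≤ 2 * m) rfl
    have hscale : ((2 * m : ℕ) : ℝ) ^ (-b) = r * (m : ℝ) ^ (-b) := by
      push_cast
      exact Real.mul_rpow zero_le_two (Nat.cast_nonneg m)
    calc _ ≤ A * (m : ℝ) ^ (-b) + K * (r * (m : ℝ) ^ (-b)) :=
          add_le_add (hblock m hm) (hscale ▸ htail)
      _ = K * (m : ℝ) ^ (-b) := by linear_combination (m : ℝ) ^ (-b) * hK

theorem stmt_1_general (C β : ℝ) (a : ℕ → ℝ) (hC : 0 < C)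
    (h_nonneg : ∀ j, 0 ≤ a j) (h_mono : ∀ j, a (j+1) ≤ a j)
    (h_decay : ∀ j : ℕ, 1 ≤ j → a j ≤ C * (j:ℝ) ^ (-β - 1)) :
    ∀ σ : ℝ, 1 < 2*σ → 2*σ < 1 + β →
    ∃ C' > 0, ∀ m₁ m₂ : ℕ, 2 ≤ m₁ → m₁ < m₂ →
      ∑ j ∈ Finset.Icc m₁ m₂, (a j - a (j+4)) * (j:ℝ) ^ (2*σ)
        ≤ C' * (m₁:ℝ) ^ (-(β + 1 - 2*σ)) := by
  intro σ hσ₁ hσ₂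
  have ha : Antitone a := antitone_nat_of_succ_le h_mono
  have hA : 0 < 4 * C * 2 ^ (2 * σ) := by positivity
  have hr : (2 : ℝ) ^ (-(β + 1 - 2 * σ)) < 1 :=
    Real.rpow_lt_one_of_one_lt_of_neg one_lt_two (by linarith)
  refine ⟨_, div_pos hA (sub_pos.2 hr), fun m₁ m₂ hm₁ _ => ?_⟩
  rw [← Ico_add_one_right_eq_Icc]
  refine sum_Ico_le_of_sum_Ico_two_mul_le (fun j => ?_) hA.le (by linarith) (fun m hm => ?_)
    (by omega) _
  · exact mul_nonneg (sub_nonneg.2 (ha (by omega))) (by positivity)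
  · exact_mod_cast sum_Ico_two_mul_sub_shift_mul_rpow_le ha h_nonneg (by linarith) h_decay 4 hm

/-- Summation-by-parts estimate (Colding–Minicozzi Lemma 2.73 version):
a non-increasing nonnegative sequence with `a_j ≤ C j^{-β-1}` satisfies
`∑_{j=m₁}^{m₂} (a_j - a_{j+4}) j^{2σ} ≤ C' m₁^{-(β+1-2σ)}` for `1 < 2σ < 1+β`. -/
theorem stmt_1 (C β : ℝ) (a : ℕ → ℝ) (hC : 0 < C) (hβ : 0 < β)
    (h_nonneg : ∀ j, 0 ≤ a j) (h_mono : ∀ j, a (j+1) ≤ a j)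
    (h_decay : ∀ j : ℕ, 1 ≤ j → a j ≤ C * (j:ℝ) ^ (-β - 1)) :
    ∀ σ : ℝ, 1 < 2*σ → 2*σ < 1 + β →
    ∃ C' > 0, ∀ m₁ m₂ : ℕ, 2 ≤ m₁ → m₁ < m₂ →
      ∑ j ∈ Finset.Icc m₁ m₂, (a j - a (j+4)) * (j:ℝ) ^ (2*σ)
        ≤ C' * (m₁:ℝ) ^ (-(β + 1 - 2*σ)) :=
  stmt_1_general C β a hC h_nonneg h_mono h_decay
end

section
/- Let f ∈ H¹(ℝ) vanish a.e. outside (0,L). For δ ∈ (0,L/4) let η_δ : ℝ → [0,1] be Lipschitz with η_δ ≡ 1 on [δ, L-δ], η_δ ≡ 0 outside (δ/2, L-δ/2), and |η_δ'| ≤ C/δ. Then ‖η_δ f - f‖_{H¹(ℝ)} → 0 as δ → 0. -/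
open MeasureTheory Filter Set Topology
open scoped NNReal ENNReal

/-!
Outside the strips `S_δ = [0, δ] ∪ [L - δ, L]` the product `η_δ f` agrees with `f` near every
point (`η_δ = 1` on `(δ, L - δ)` and `f = 0` off `[0, L]`), so both error integrands are
supported in `S_δ`. There `|η_δ f - f| ≤ |f|` and `|(η_δ f)' - f'| ≤ (C/δ)|f| + |f'|`, and the
factor `1/δ` is absorbed by the Poincaré inequality `∫_{S_δ} f² ≤ (2δ)² ∫_{S_δ} f'²`, which holds
because `f` vanishes at `0` and `L`. The error is therefore `O(∫_{S_δ} f'²)`, which tends to `0`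
with the measure of `S_δ`.
-/

section

variable {α : Type*} [MeasurableSpace α] {μ : Measure α} {s : Set α}

theorem sq_setIntegral_le_measureReal_mul_setIntegral_sq (hs : μ s ≠ ∞) {g : α → ℝ}
    (hg : MemLp g 2 (μ.restrict s)) :
    (∫ x in s, g x ∂μ) ^ 2 ≤ μ.real s * ∫ x in s, g x ^ 2 ∂μ := by
  rcases eq_or_ne (μ s) 0 with h0 | h0
  · simp [Measure.restrict_eq_zero.2 h0]
  have : IsFiniteMeasure (μ.restrict s) := isFiniteMeasure_restrict.2 hs
  have hpos : 0 < μ.real s := ENNReal.toReal_pos h0 hs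
  have jensen := (even_two.convexOn_pow (𝕜 := ℝ)).map_set_average_le (continuousOn_pow 2)
    isClosed_univ h0 hs (ae_of_all _ fun _ => mem_univ _) (hg.integrable one_le_two)
    hg.integrable_sq
  rw [setAverage_eq, setAverage_eq, smul_eq_mul, smul_eq_mul, mul_pow,
    inv_pow, ← div_eq_inv_mul, ← div_eq_inv_mul, div_le_div_iff₀ (by positivity) hpos] at jensen
  nlinarith

theorem setIntegral_sq_le_of_abs_le_setIntegral_abs (hsm : MeasurableSet s) (hs : μ s ≠ ∞)
    {g g' : α → ℝ} (hg' : MemLp g' 2 (μ.restrict s))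
    (hbound : ∀ x ∈ s, |g x| ≤ ∫ y in s, |g' y| ∂μ) :
    ∫ x in s, g x ^ 2 ∂μ ≤ μ.real s ^ 2 * ∫ x in s, g' x ^ 2 ∂μ := by
  have : IsFiniteMeasure (μ.restrict s) := isFiniteMeasure_restrict.2 hs
  set M := ∫ y in s, |g' y| ∂μ
  have cauchy_schwarz : M ^ 2 ≤ μ.real s * ∫ x in s, g' x ^ 2 ∂μ := by
    simpa only [Pi.abs_apply, sq_abs] using
      sq_setIntegral_le_measureReal_mul_setIntegral_sq hs hg'.abs
  calc ∫ x in s, g x ^ 2 ∂μ ≤ ∫ _ in s, M ^ 2 ∂μ := by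
        refine integral_mono_of_nonneg (ae_of_all _ fun _ => sq_nonneg _)
          (integrable_const _) ?_
        filter_upwards [ae_restrict_mem hsm] with x hx
        simpa only [sq_abs] using pow_le_pow_left₀ (abs_nonneg _) (hbound x hx) 2
    _ = μ.real s * M ^ 2 := by rw [setIntegral_const, smul_eq_mul]
    _ ≤ μ.real s * (μ.real s * ∫ x in s, g' x ^ 2 ∂μ) := by gcongr
    _ = μ.real s ^ 2 * ∫ x in s, g' x ^ 2 ∂μ := by ring

end

theorem ae_hasDerivAt_of_sub_eq_intervalIntegral {E : Type*} [NormedAddCommGroup E]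
    [NormedSpace ℝ E] [CompleteSpace E] {f f' : ℝ → E} {a : ℝ} (hf' : LocallyIntegrable f')
    (hf : ∀ x, f x - f a = ∫ t in a..x, f' t) :
    ∀ᵐ x, HasDerivAt f (f' x) x := by
  have hprimitive : f = fun x => f a + ∫ t in a..x, f' t :=
    funext fun x => by rw [← hf x, add_sub_cancel]
  filter_upwards [LocallyIntegrable.ae_hasDerivAt_integral hf'] with x hx
  rw [hprimitive]
  exact (hx a).const_add _

theorem abs_intervalIntegral_le_setIntegral_abs {g : ℝ → ℝ} {a b : ℝ} {s : Set ℝ} (hab : a ≤ b)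
    (hs : Ioc a b ⊆ s) (hg : IntegrableOn g s) :
    |∫ t in a..b, g t| ≤ ∫ t in s, |g t| :=
  calc |∫ t in a..b, g t| ≤ ∫ t in a..b, |g t| :=
        intervalIntegral.abs_integral_le_integral_abs hab
    _ = ∫ t in Ioc a b, |g t| := intervalIntegral.integral_of_le hab
    _ ≤ ∫ t in s, |g t| :=
        setIntegral_mono_set hg.abs (ae_of_all _ fun _ => abs_nonneg _) hs.eventuallyLE

def boundaryStrips (L δ : ℝ) : Set ℝ := Icc 0 δ ∪ Icc (L - δ) L

namespace boundaryStrips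

variable {L δ : ℝ}

theorem measurableSet : MeasurableSet (boundaryStrips L δ) :=
  measurableSet_Icc.union measurableSet_Icc

theorem isCompact : IsCompact (boundaryStrips L δ) :=
  isCompact_Icc.union isCompact_Icc

theorem volume_le (hδ : 0 ≤ δ) : volume (boundaryStrips L δ) ≤ ENNReal.ofReal (2 * δ) :=
  calc volume (boundaryStrips L δ) ≤ volume (Icc 0 δ) + volume (Icc (L - δ) L) :=
        measure_union_le _ _
    _ = ENNReal.ofReal (2 * δ) := by
        rw [Real.volume_Icc, Real.volume_Icc, sub_zero, sub_sub_cancel,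
          ← ENNReal.ofReal_add hδ hδ, two_mul]

end boundaryStrips

theorem MeasureTheory.Integrable.tendsto_setIntegral_boundaryStrips {L : ℝ} {g : ℝ → ℝ}
    (hg : Integrable g) :
    Tendsto (fun δ => ∫ t in boundaryStrips L δ, g t) (𝓝[>] 0) (𝓝 0) := by
  refine hg.tendsto_setIntegral_nhds_zero ?_
  have hlim : Tendsto (fun δ : ℝ => ENNReal.ofReal (2 * δ)) (𝓝 0) (𝓝 0) := by
    simpa using ENNReal.tendsto_ofReal ((continuous_const_mul 2).tendsto 0)
  exact tendsto_of_tendsto_of_tendsto_of_le_of_le' tendsto_const_nhds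
    (hlim.mono_left nhdsWithin_le_nhds)
    (Eventually.of_forall fun _ => zero_le)
    (eventually_nhdsWithin_of_forall fun δ hδ => boundaryStrips.volume_le (le_of_lt hδ))

section Cutoff

variable {L δ : ℝ} {f f' η : ℝ → ℝ}

theorem abs_le_setIntegral_boundaryStrips (hFTC : ∀ a b : ℝ, f b - f a = ∫ t in a..b, f' t)
    (hvanish : ∀ t, t ∉ Ioo 0 L → f t = 0) (hf' : IntegrableOn f' (boundaryStrips L δ))
    {t : ℝ} (ht : t ∈ boundaryStrips L δ) :
    |f t| ≤ ∫ s in boundaryStrips L δ, |f' s| := by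
  rcases ht with ⟨ht0, htδ⟩ | ⟨htδ, htL⟩
  · have hft : f t = ∫ s in 0..t, f' s := by
      rw [← hFTC, hvanish 0 (by simp), sub_zero]
    rw [hft]
    exact abs_intervalIntegral_le_setIntegral_abs ht0
      (fun s hs => Or.inl ⟨hs.1.le, hs.2.trans htδ⟩) hf'
  · have hft : f t = -∫ s in t..L, f' s := by
      rw [← hFTC, hvanish L (by simp), zero_sub, neg_neg]
    rw [hft, abs_neg]
    exact abs_intervalIntegral_le_setIntegral_abs htL
      (fun s hs => Or.inr ⟨htδ.trans hs.1.le, hs.2⟩) hf'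

theorem setIntegral_boundaryStrips_sq_le (hFTC : ∀ a b : ℝ, f b - f a = ∫ t in a..b, f' t)
    (hvanish : ∀ t, t ∉ Ioo 0 L → f t = 0) (hf' : MemLp f' 2) (hδ : 0 ≤ δ) :
    ∫ t in boundaryStrips L δ, f t ^ 2 ≤ (2 * δ) ^ 2 * ∫ t in boundaryStrips L δ, f' t ^ 2 := by
  have hvol := boundaryStrips.volume_le (L := L) hδ
  have hfin : volume (boundaryStrips L δ) ≠ ∞ := ne_top_of_le_ne_top ENNReal.ofReal_ne_top hvol
  have hf'S : IntegrableOn f' (boundaryStrips L δ) :=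
    (hf'.locallyIntegrable one_le_two).integrableOn_isCompact boundaryStrips.isCompact
  calc ∫ t in boundaryStrips L δ, f t ^ 2
      ≤ volume.real (boundaryStrips L δ) ^ 2 * ∫ t in boundaryStrips L δ, f' t ^ 2 :=
        setIntegral_sq_le_of_abs_le_setIntegral_abs boundaryStrips.measurableSet hfin
          (hf'.restrict _) fun t ht => abs_le_setIntegral_boundaryStrips hFTC hvanish hf'S ht
    _ ≤ (2 * δ) ^ 2 * ∫ t in boundaryStrips L δ, f' t ^ 2 := by
        gcongr
        exact ENNReal.toReal_le_of_le_ofReal (by positivity) hvol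

theorem cutoff_mul_eventuallyEq (hvanish : ∀ t, t ∉ Ioo 0 L → f t = 0)
    (h1 : ∀ t ∈ Icc δ (L - δ), η t = 1) {t : ℝ} (ht : t ∉ boundaryStrips L δ) :
    (fun s => η s * f s) =ᶠ[𝓝 t] f := by
  by_cases htL : t ∈ Icc 0 L
  · have htδ : t ∈ Ioo δ (L - δ) := by
      simp only [boundaryStrips, mem_union, mem_Icc, not_or, not_and_or, not_le] at ht
      exact ⟨ht.1.resolve_left htL.1.not_gt, ht.2.resolve_right htL.2.not_gt⟩
    filter_upwards [isOpen_Ioo.mem_nhds htδ] with s hs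
    rw [h1 s (Ioo_subset_Icc_self hs), one_mul]
  · filter_upwards [isClosed_Icc.isOpen_compl.mem_nhds htL] with s hs
    rw [hvanish s fun h => hs (Ioo_subset_Icc_self h), mul_zero]

theorem sq_cutoff_mul_sub_le (hvanish : ∀ t, t ∉ Ioo 0 L → f t = 0)
    (h01 : ∀ t, η t ∈ Icc 0 1) (h1 : ∀ t ∈ Icc δ (L - δ), η t = 1) (t : ℝ) :
    (η t * f t - f t) ^ 2 ≤ (boundaryStrips L δ).indicator (fun s => f s ^ 2) t := by
  by_cases ht : t ∈ boundaryStrips L δ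
  · rw [indicator_of_mem ht]
    obtain ⟨h0, h1⟩ := h01 t
    have : (η t - 1) ^ 2 ≤ 1 := by nlinarith
    calc (η t * f t - f t) ^ 2 = (η t - 1) ^ 2 * f t ^ 2 := by ring
      _ ≤ 1 * f t ^ 2 := by gcongr
      _ = f t ^ 2 := one_mul _
  · rw [indicator_of_notMem ht, (cutoff_mul_eventuallyEq hvanish h1 ht).eq_of_nhds, sub_self,
      sq, mul_zero]

theorem sq_deriv_cutoff_mul_sub_le {K : ℝ≥0} (hvanish : ∀ t, t ∉ Ioo 0 L → f t = 0)
    (h01 : ∀ t, η t ∈ Icc 0 1) (h1 : ∀ t ∈ Icc δ (L - δ), η t = 1) (hlip : LipschitzWith K η)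
    {t : ℝ} (hf : HasDerivAt f (f' t) t) (hη : DifferentiableAt ℝ η t) :
    (deriv (fun s => η s * f s) t - f' t) ^ 2 ≤
      (boundaryStrips L δ).indicator (fun s => 2 * K ^ 2 * f s ^ 2 + 2 * f' s ^ 2) t := by
  by_cases ht : t ∈ boundaryStrips L δ
  · have hderiv : HasDerivAt (fun s => η s * f s) (deriv η t * f t + η t * f' t) t :=
      hη.hasDerivAt.mul hf
    rw [indicator_of_mem ht, hderiv.deriv]
    have hη' : deriv η t ^ 2 ≤ K ^ 2 := by
      simpa only [Real.norm_eq_abs, sq_abs] using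
        pow_le_pow_left₀ (norm_nonneg _) (norm_deriv_le_of_lipschitz hlip) 2
    obtain ⟨h0, h1⟩ := h01 t
    have : (η t - 1) ^ 2 ≤ 1 := by nlinarith
    calc (deriv η t * f t + η t * f' t - f' t) ^ 2
        ≤ 2 * (deriv η t ^ 2 * f t ^ 2) + 2 * ((η t - 1) ^ 2 * f' t ^ 2) := by
          nlinarith [sq_nonneg (deriv η t * f t - (η t - 1) * f' t)]
      _ ≤ 2 * (K ^ 2 * f t ^ 2) + 2 * (1 * f' t ^ 2) := by gcongr
      _ = 2 * K ^ 2 * f t ^ 2 + 2 * f' t ^ 2 := by ring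
  · rw [indicator_of_notMem ht, (cutoff_mul_eventuallyEq hvanish h1 ht).deriv_eq, hf.deriv,
      sub_self, sq, mul_zero]
theorem cutoff_error_le {K : ℝ≥0} (hcont : Continuous f) (hf' : MemLp f' 2)
    (hFTC : ∀ a b : ℝ, f b - f a = ∫ t in a..b, f' t) (hvanish : ∀ t, t ∉ Ioo 0 L → f t = 0)
    (h01 : ∀ t, η t ∈ Icc 0 1) (h1 : ∀ t ∈ Icc δ (L - δ), η t = 1) (hlip : LipschitzWith K η)
    (hδ : 0 ≤ δ) :
    (∫ t, (η t * f t - f t) ^ 2) + ∫ t, (deriv (fun s => η s * f s) t - f' t) ^ 2 ≤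
      (4 * δ ^ 2 + 8 * (K * δ) ^ 2 + 2) * ∫ t in boundaryStrips L δ, f' t ^ 2 := by
  have hS := boundaryStrips.measurableSet (L := L) (δ := δ)
  have hfS : IntegrableOn (fun t => f t ^ 2) (boundaryStrips L δ) :=
    (hcont.pow 2).continuousOn.integrableOn_compact boundaryStrips.isCompact
  have hf'S : IntegrableOn (fun t => f' t ^ 2) (boundaryStrips L δ) :=
    hf'.integrable_sq.integrableOn
  have hvalue : ∫ t, (η t * f t - f t) ^ 2 ≤ ∫ t in boundaryStrips L δ, f t ^ 2 := by
    rw [← integral_indicator hS]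
    exact integral_mono_of_nonneg (ae_of_all _ fun _ => sq_nonneg _)
      (hfS.integrable_indicator hS) (ae_of_all _ (sq_cutoff_mul_sub_le hvanish h01 h1))
  have hderiv : ∫ t, (deriv (fun s => η s * f s) t - f' t) ^ 2 ≤
      2 * K ^ 2 * (∫ t in boundaryStrips L δ, f t ^ 2) +
        2 * ∫ t in boundaryStrips L δ, f' t ^ 2 := by
    rw [← integral_const_mul, ← integral_const_mul,
      ← integral_add (hfS.const_mul _) (hf'S.const_mul _), ← integral_indicator hS]
    refine integral_mono_of_nonneg (ae_of_all _ fun _ => sq_nonneg _)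
      (IntegrableOn.integrable_indicator ((hfS.const_mul _).add (hf'S.const_mul _)) hS) ?_
    filter_upwards [ae_hasDerivAt_of_sub_eq_intervalIntegral
      (hf'.locallyIntegrable one_le_two) (hFTC 0), hlip.ae_differentiableAt] with t hf hη
    exact sq_deriv_cutoff_mul_sub_le hvanish h01 h1 hlip hf hη
  have hpoincare := setIntegral_boundaryStrips_sq_le hFTC hvanish hf' hδ
  have hf'nonneg : 0 ≤ ∫ t in boundaryStrips L δ, f' t ^ 2 :=
    setIntegral_nonneg hS fun _ _ => sq_nonneg _
  calc (∫ t, (η t * f t - f t) ^ 2) + ∫ t, (deriv (fun s => η s * f s) t - f' t) ^ 2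
      ≤ (1 + 2 * K ^ 2) * (∫ t in boundaryStrips L δ, f t ^ 2) +
          2 * ∫ t in boundaryStrips L δ, f' t ^ 2 := by linarith
    _ ≤ (1 + 2 * K ^ 2) * ((2 * δ) ^ 2 * ∫ t in boundaryStrips L δ, f' t ^ 2) +
          2 * ∫ t in boundaryStrips L δ, f' t ^ 2 := by gcongr
    _ = (4 * δ ^ 2 + 8 * (K * δ) ^ 2 + 2) * ∫ t in boundaryStrips L δ, f' t ^ 2 := by ring

end Cutoff

theorem stmt_12_general (L Cc : ℝ) (f f' : ℝ → ℝ)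
    (hcont : Continuous f)
    (hf'L2 : MemLp f' 2 volume)
    (hFTC : ∀ a b : ℝ, f b - f a = ∫ t in a..b, f' t)
    (hvanish : ∀ t, t ∉ Set.Ioo 0 L → f t = 0)
    (η : ℝ → ℝ → ℝ)
    (hη01 : ∀ δ ∈ Set.Ioo 0 (L/4), ∀ t, η δ t ∈ Set.Icc (0:ℝ) 1)
    (hη1 : ∀ δ ∈ Set.Ioo 0 (L/4), ∀ t ∈ Set.Icc δ (L - δ), η δ t = 1)
    (hηlip : ∀ δ ∈ Set.Ioo 0 (L/4), LipschitzWith (Real.toNNReal (Cc/δ)) (η δ)) :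
    Tendsto (fun δ =>
        (∫ t, (η δ t * f t - f t)^2) +
        ∫ t, (deriv (fun s => η δ s * f s) t - f' t)^2)
      (nhdsWithin 0 (Set.Ioo 0 (L/4))) (nhds 0) := by
  set G := fun δ => ∫ t in boundaryStrips L δ, f' t ^ 2
  have hbound : ∀ δ ∈ Ioo 0 (L / 4),
      (∫ t, (η δ t * f t - f t) ^ 2) + ∫ t, (deriv (fun s => η δ s * f s) t - f' t) ^ 2 ≤
        (4 * δ ^ 2 + 8 * Cc ^ 2 + 2) * G δ := by
    intro δ hδ
    have hKδ : ((Cc / δ).toNNReal * δ : ℝ) ^ 2 ≤ Cc ^ 2 := by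
      rw [Real.coe_toNNReal', max_mul_of_nonneg _ _ hδ.1.le, div_mul_cancel₀ _ hδ.1.ne', zero_mul]
      simpa only [sq_abs] using
        pow_le_pow_left₀ (le_max_right _ _) (max_le (le_abs_self Cc) (abs_nonneg Cc)) 2
    refine (cutoff_error_le hcont hf'L2 hFTC hvanish (hη01 δ hδ) (hη1 δ hδ) (hηlip δ hδ)
      hδ.1.le).trans ?_
    gcongr
  have hG : Tendsto G (𝓝[Ioo 0 (L / 4)] 0) (𝓝 0) :=
    hf'L2.integrable_sq.tendsto_setIntegral_boundaryStrips.mono_left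
      (nhdsWithin_mono _ Ioo_subset_Ioi_self)
  have hcoeff : Tendsto (fun δ : ℝ => 4 * δ ^ 2 + 8 * Cc ^ 2 + 2) (𝓝[Ioo 0 (L / 4)] 0)
      (𝓝 (4 * 0 ^ 2 + 8 * Cc ^ 2 + 2)) :=
    ((by fun_prop : Continuous fun δ : ℝ => 4 * δ ^ 2 + 8 * Cc ^ 2 + 2).tendsto 0).mono_left
      nhdsWithin_le_nhds
  refine squeeze_zero' (Eventually.of_forall fun δ => add_nonneg
      (integral_nonneg fun _ => sq_nonneg _) (integral_nonneg fun _ => sq_nonneg _))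
    (eventually_nhdsWithin_of_forall hbound) ?_
  simpa using hcoeff.mul hG

/-- Cutoff approximation: if `f ∈ H¹(ℝ)` vanishes outside `(0,L)` and `η_δ` are
Lipschitz cutoffs with `η_δ ≡ 1` on `[δ, L-δ]`, `η_δ ≡ 0` outside `(δ/2, L-δ/2)`,
`0 ≤ η_δ ≤ 1` and `|η_δ'| ≤ C/δ`, then `‖η_δ f - f‖_{H¹(ℝ)} → 0` as `δ → 0`. -/
theorem stmt_12 (L Cc : ℝ) (hL : 0 < L) (hCc : 0 < Cc) (f f' : ℝ → ℝ)
    (hcont : Continuous f)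
    (hf'int : ∀ a b : ℝ, IntervalIntegrable f' volume a b)
    (hf'L2 : MemLp f' 2 volume)
    (hFTC : ∀ a b : ℝ, f b - f a = ∫ t in a..b, f' t)
    (hvanish : ∀ t, t ∉ Set.Ioo 0 L → f t = 0)
    (η : ℝ → ℝ → ℝ)
    (hη01 : ∀ δ ∈ Set.Ioo 0 (L/4), ∀ t, η δ t ∈ Set.Icc (0:ℝ) 1)
    (hη1 : ∀ δ ∈ Set.Ioo 0 (L/4), ∀ t ∈ Set.Icc δ (L - δ), η δ t = 1)
    (hη0 : ∀ δ ∈ Set.Ioo 0 (L/4), ∀ t, t ∉ Set.Ioo (δ/2) (L - δ/2) → η δ t = 0)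
    (hηlip : ∀ δ ∈ Set.Ioo 0 (L/4), LipschitzWith (Real.toNNReal (Cc/δ)) (η δ)) :
    Tendsto (fun δ =>
        (∫ t, (η δ t * f t - f t)^2) +
        ∫ t, (deriv (fun s => η δ s * f s) t - f' t)^2)
      (nhdsWithin 0 (Set.Ioo 0 (L/4))) (nhds 0) :=
  stmt_12_general L Cc f f' hcont hf'L2 hFTC hvanish η hη01 hη1 hηlip
end

section
/- Fix μ > 0, L > 0 with e^{2μL} > 2, integers t₁ < t₂ < t₃, and β ∈ (0, μ) with e^{2(μ-β)L} > 2. For real numbers a⁺, a⁻ define f(t) := a⁺ e^{μ t} + a⁻ e^{-μ t} and the norm N_j := ∫_{t_j L}^{(t_j+1)L} f(t)² dt. Then N_{t₂} ≤ e^{-2βL}·(N_{t₁} + N_{t₃}). -/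
/-!
On the window of length `L` centred at `c`, the energy of `p e^{μt} + m e^{-μt}` equals
`x² K + y² K + 2pmL` with `x = p e^{μc}`, `y = m e^{-μc}` and `K = sinh(μL)/μ`.
Shifting the window right by at least `L` multiplies `x²` by at least `e^{2μL}`, shifting it
left does the same to `y²`; since `e^{-2βL} e^{2μL} > 2`, the outer windows dominate twice the
diagonal part of the middle one. The cross term `2pmL = 2xyL` is absorbed by `2|xy| ≤ x² + y²`
together with `L ≤ sinh(μL)/μ`.
-/

open Real

theorem integral_sq_mul_exp_add_mul_exp {μ : ℝ} (hμ : μ ≠ 0) (p m a b : ℝ) :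
    ∫ t in a..b, (p * exp (μ * t) + m * exp (-μ * t)) ^ 2
      = (p ^ 2 * (exp (2 * μ * b) - exp (2 * μ * a))
          - m ^ 2 * (exp (-2 * μ * b) - exp (-2 * μ * a))) / (2 * μ)
        + 2 * p * m * (b - a) := by
  let F : ℝ → ℝ := fun t ↦
    (p ^ 2 * exp (2 * μ * t) - m ^ 2 * exp (-2 * μ * t)) / (2 * μ) + 2 * p * m * t
  have hF : ∀ t, HasDerivAt F ((p * exp (μ * t) + m * exp (-μ * t)) ^ 2) t := by
    intro t
    have hpos := ((hasDerivAt_id t).const_mul (2 * μ)).exp.const_mul (p ^ 2)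
    have hneg := ((hasDerivAt_id t).const_mul (-2 * μ)).exp.const_mul (m ^ 2)
    refine (((hpos.sub hneg).div_const (2 * μ)).add
      ((hasDerivAt_id t).const_mul (2 * p * m))).congr_deriv ?_
    simp only [id, mul_one]
    have epos : exp (2 * μ * t) = exp (μ * t) ^ 2 := by rw [← exp_nat_mul]; ring_nf
    have eneg : exp (-2 * μ * t) = exp (-μ * t) ^ 2 := by rw [← exp_nat_mul]; ring_nf
    have e : exp (μ * t) * exp (-μ * t) = 1 := by rw [← exp_add]; ring_nf; exact exp_zero
    rw [epos, eneg]
    field_simp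
    simp only [neg_mul] at e ⊢
    linear_combination -(2 * p * m * e)
  rw [intervalIntegral.integral_eq_sub_of_hasDerivAt (fun t _ ↦ hF t)
    ((by fun_prop : Continuous _).intervalIntegrable _ _)]
  ring

theorem integral_sq_mul_exp_add_mul_exp_window {μ : ℝ} (hμ : μ ≠ 0) (p m s L : ℝ) :
    ∫ t in s * L..(s + 1) * L, (p * exp (μ * t) + m * exp (-μ * t)) ^ 2
      = (p * exp (μ * ((s + 1 / 2) * L))) ^ 2 * (sinh (μ * L) / μ)
        + (m * exp (-μ * ((s + 1 / 2) * L))) ^ 2 * (sinh (μ * L) / μ) + 2 * p * m * L := by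
  have exp_eq_sq_mul (x y z : ℝ) (h : z = 2 * x + y) : exp z = exp x ^ 2 * exp y := by
    rw [← exp_nat_mul, ← exp_add, h]; push_cast; ring_nf
  rw [integral_sq_mul_exp_add_mul_exp hμ, sinh_eq,
    exp_eq_sq_mul (μ * ((s + 1 / 2) * L)) (μ * L) (2 * μ * ((s + 1) * L)) (by ring),
    exp_eq_sq_mul (μ * ((s + 1 / 2) * L)) (-(μ * L)) (2 * μ * (s * L)) (by ring),
    exp_eq_sq_mul (-μ * ((s + 1 / 2) * L)) (-(μ * L)) (-2 * μ * ((s + 1) * L)) (by ring),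
    exp_eq_sq_mul (-μ * ((s + 1 / 2) * L)) (μ * L) (-2 * μ * (s * L)) (by ring)]
  field_simp
  ring

theorem add_add_le_mul_of_abs_le {C₁ C₂ C₃ E₁ E₂ E₃ D q : ℝ} (hC₁ : 0 ≤ C₁) (hE₃ : 0 ≤ E₃)
    (hq₀ : 0 ≤ q) (hq₁ : q ≤ 1) (hC : 2 * C₂ ≤ q * C₃) (hE : 2 * E₂ ≤ q * E₁)
    (hD : |D| ≤ C₂ + E₂) :
    C₂ + E₂ + D ≤ q * ((C₁ + E₁ + D) + (C₃ + E₃ + D)) := by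
  obtain ⟨hD_lo, hD_hi⟩ := abs_le.mp hD
  -- `(1 - 2q) D = (1 - q) D - q D ≤ C₂ + E₂`
  nlinarith [mul_le_mul_of_nonneg_left hD_hi (sub_nonneg.mpr hq₁),
    mul_le_mul_of_nonneg_left hD_lo hq₀]

theorem abs_two_mul_mul_mul_le {x y L K : ℝ} (hL : 0 ≤ L) (hLK : L ≤ K) :
    |2 * x * y * L| ≤ x ^ 2 * K + y ^ 2 * K := by
  have hxy : |2 * x * y| ≤ x ^ 2 + y ^ 2 :=
    abs_le.mpr ⟨by nlinarith [two_mul_le_add_sq (-x) y], two_mul_le_add_sq x y⟩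
  rw [abs_mul, abs_of_nonneg hL, ← add_mul]
  exact mul_le_mul hxy hLK hL (by positivity)

theorem abs_cross_term_le {μ L : ℝ} (hμ : 0 < μ) (hL : 0 ≤ L) (p m c : ℝ) :
    |2 * p * m * L| ≤ (p * exp (μ * c)) ^ 2 * (sinh (μ * L) / μ)
      + (m * exp (-μ * c)) ^ 2 * (sinh (μ * L) / μ) := by
  have hLK : L ≤ sinh (μ * L) / μ := by
    rw [le_div_iff₀ hμ, mul_comm]
    exact self_le_sinh_iff.mpr (by positivity)
  have hpm : p * m = (p * exp (μ * c)) * (m * exp (-μ * c)) := by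
    rw [mul_mul_mul_comm, ← exp_add, neg_mul, add_neg_cancel, exp_zero, mul_one]
  rw [mul_assoc 2 p m, hpm, ← mul_assoc]
  exact abs_two_mul_mul_mul_le hL hLK

theorem two_mul_sq_mul_exp_mul_le {q κ u v K : ℝ} (p : ℝ) (hq : 2 < q * exp (2 * κ))
    (hq₀ : 0 ≤ q) (hK : 0 ≤ K) (huv : u + κ ≤ v) :
    2 * ((p * exp u) ^ 2 * K) ≤ q * ((p * exp v) ^ 2 * K) := by
  have hexp : exp (2 * κ) * exp u ^ 2 ≤ exp v ^ 2 := by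
    rw [← exp_nat_mul, ← exp_nat_mul, ← exp_add]; gcongr; push_cast; linarith
  calc 2 * ((p * exp u) ^ 2 * K) ≤ q * exp (2 * κ) * ((p * exp u) ^ 2 * K) := by gcongr
    _ = p ^ 2 * K * (q * (exp (2 * κ) * exp u ^ 2)) := by ring
    _ ≤ p ^ 2 * K * (q * exp v ^ 2) := by gcongr
    _ = q * ((p * exp v) ^ 2 * K) := by ring

theorem stmt_13_general (μ L β : ℝ) (hμ : 0 < μ) (hL : 0 < L)
    (hβ0 : 0 < β)
    (h2 : 2 < Real.exp (2*(μ - β)*L))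
    (t₁ t₂ t₃ : ℕ) (h12 : t₁ < t₂) (h23 : t₂ < t₃) (ap am : ℝ) :
    (∫ t in ((t₂:ℝ)*L)..(((t₂:ℝ)+1)*L),
        (ap * Real.exp (μ*t) + am * Real.exp (-μ*t))^2)
      ≤ Real.exp (-2*β*L) *
      ((∫ t in ((t₁:ℝ)*L)..(((t₁:ℝ)+1)*L),
          (ap * Real.exp (μ*t) + am * Real.exp (-μ*t))^2) +
       (∫ t in ((t₃:ℝ)*L)..(((t₃:ℝ)+1)*L),
          (ap * Real.exp (μ*t) + am * Real.exp (-μ*t))^2)) := by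
  simp only [integral_sq_mul_exp_add_mul_exp_window hμ.ne']
  have hK : 0 ≤ sinh (μ * L) / μ := div_nonneg (sinh_nonneg_iff.mpr (by positivity)) hμ.le
  have hq : 2 < exp (-2 * β * L) * exp (2 * (μ * L)) := by
    rw [← exp_add]; convert h2 using 2; ring
  have hμL : 0 ≤ μ * L := by positivity
  have h12' : 0 ≤ μ * L * (t₂ - (t₁ + 1)) :=
    mul_nonneg hμL (sub_nonneg.mpr (by exact_mod_cast h12))
  have h23' : 0 ≤ μ * L * (t₃ - (t₂ + 1)) :=
    mul_nonneg hμL (sub_nonneg.mpr (by exact_mod_cast h23))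
  apply add_add_le_mul_of_abs_le (by positivity) (by positivity) (exp_pos _).le
  · exact exp_le_one_iff.mpr (by nlinarith)
  · exact two_mul_sq_mul_exp_mul_le ap hq (exp_pos _).le hK (by linarith)
  · exact two_mul_sq_mul_exp_mul_le am hq (exp_pos _).le hK (by linarith)
  · exact abs_cross_term_le hμ hL.le ap am _

/-- Single-mode three circles inequality on a cylinder: for
`f(t) = a⁺ e^{μt} + a⁻ e^{-μt}` and `N_j = ∫_{t_jL}^{(t_j+1)L} f²`, with
`e^{2μL} > 2`, `0 < β < μ`, `e^{2(μ-β)L} > 2`, and integers `t₁ < t₂ < t₃`, one has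
`N_{t₂} ≤ e^{-2βL} (N_{t₁} + N_{t₃})`. -/
theorem stmt_13 (μ L β : ℝ) (hμ : 0 < μ) (hL : 0 < L)
    (h1 : 2 < Real.exp (2*μ*L)) (hβ0 : 0 < β) (hβμ : β < μ)
    (h2 : 2 < Real.exp (2*(μ - β)*L))
    (t₁ t₂ t₃ : ℕ) (h12 : t₁ < t₂) (h23 : t₂ < t₃) (ap am : ℝ) :
    (∫ t in ((t₂:ℝ)*L)..(((t₂:ℝ)+1)*L),
        (ap * Real.exp (μ*t) + am * Real.exp (-μ*t))^2)
      ≤ Real.exp (-2*β*L) *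
      ((∫ t in ((t₁:ℝ)*L)..(((t₁:ℝ)+1)*L),
          (ap * Real.exp (μ*t) + am * Real.exp (-μ*t))^2) +
       (∫ t in ((t₃:ℝ)*L)..(((t₃:ℝ)+1)*L),
          (ap * Real.exp (μ*t) + am * Real.exp (-μ*t))^2)) :=
  stmt_13_general μ L β hμ hL hβ0 h2 t₁ t₂ t₃ h12 h23 ap am
end
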